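/- arXiv:1809.10508 — 2 statements merged into one kernel-verified Lean document; each statement's English description precedes it below -/
import Mathlib

section
/- Let G be a median graph, z a vertex of G, and let u, v be vertices of G with gates x and y, respectively, in the star St(z). Then I(x,z) ∩ I(y,z) = {z} if and only if d_G(u,v) = d_G(u,z) + d_G(z,v), i.e., z ∈ I(u,v). -/
open SimpleGraph Set

/-- The metric interval `I(u,v)` in a graph `G`. -/
def gInterval {V : Type*} (G : SimpleGraph V) (u v : V) : Set V :=
  {w | G.dist u w + G.dist w v = G.dist u v}

/-- A median graph: a connected graph in which every triplet of vertices has a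
unique median, i.e. a unique vertex in `I(x,y) ∩ I(y,z) ∩ I(z,x)`. -/
def MedianGraph {V : Type*} (G : SimpleGraph V) : Prop :=
  G.Connected ∧ ∀ x y z : V,
    ∃! m : V, m ∈ gInterval G x y ∧ m ∈ gInterval G y z ∧ m ∈ gInterval G z x

/-- `G` contains an induced `d`-dimensional hypercube all of whose vertices lie in `S`. -/
def HasCubeIn {V : Type*} (G : SimpleGraph V) (d : ℕ) (S : Set V) : Prop :=
  ∃ f : Finset (Fin d) → V, Function.Injective f ∧ (∀ A, f A ∈ S) ∧
    ∀ A B : Finset (Fin d), G.Adj (f A) (f B) ↔ (symmDiff A B).card = 1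

/-- `G` contains an induced `d`-dimensional hypercube `Q_d`. -/
def HasInducedCube {V : Type*} (G : SimpleGraph V) (d : ℕ) : Prop :=
  HasCubeIn G d Set.univ

/-- A cube-free (median) graph: no induced 3-dimensional hypercube. -/
def CubeFree {V : Type*} (G : SimpleGraph V) : Prop :=
  ¬ HasInducedCube G 3

/-- `g` is a gate of `v` in the set `S`. -/
def IsGate {V : Type*} (G : SimpleGraph V) (S : Set V) (v g : V) : Prop :=
  g ∈ S ∧ ∀ u ∈ S, G.dist v u = G.dist v g + G.dist g u

/-- A set of vertices is gated if every vertex has a gate in it. -/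
def Gated {V : Type*} (G : SimpleGraph V) (S : Set V) : Prop :=
  ∀ v : V, ∃ g : V, IsGate G S v g

/-- A set of vertices is convex if it contains the interval between any two of its members. -/
def GConvex {V : Type*} (G : SimpleGraph V) (S : Set V) : Prop :=
  ∀ u ∈ S, ∀ v ∈ S, gInterval G u v ⊆ S

/-- The star `St(z)`: the set of vertices lying in some induced hypercube of `G`
containing `z`. -/
def gStar {V : Type*} (G : SimpleGraph V) (z : V) : Set V :=
  {v | ∃ (d : ℕ) (f : Finset (Fin d) → V), Function.Injective f ∧
      (∀ A B : Finset (Fin d), G.Adj (f A) (f B) ↔ (symmDiff A B).card = 1) ∧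
      (∃ A, f A = z) ∧ (∃ A, f A = v)}

/-- The fiber `F(x)` of `x` with respect to a (gated) set `H`: all vertices having `x`
as their gate in `H`. -/
def fiber {V : Type*} (G : SimpleGraph V) (H : Set V) (x : V) : Set V :=
  {v | IsGate G H v x}

/-- Two fibers are neighboring when an edge of `G` joins them. -/
def Neighboring {V : Type*} (G : SimpleGraph V) (H : Set V) (x y : V) : Prop :=
  ∃ a ∈ fiber G H x, ∃ b ∈ fiber G H y, G.Adj a b

/-- The boundary `∂_y F(x)`: vertices of `F(x)` having a neighbor in `F(y)`. -/
def bdry {V : Type*} (G : SimpleGraph V) (H : Set V) (x y : V) : Set V :=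
  {a | a ∈ fiber G H x ∧ ∃ b ∈ fiber G H y, G.Adj a b}

/-- The total boundary `∂*F(x)`: union of the boundaries `∂_y F(x)` over all `y ∈ H`
adjacent to `x`. -/
def totalBdry {V : Type*} (G : SimpleGraph V) (H : Set V) (x : V) : Set V :=
  ⋃ (y : V) (_ : y ∈ H ∧ G.Adj x y), bdry G H x y

/-- The imprint set of `u` on `A`. -/
def imprints {V : Type*} (G : SimpleGraph V) (u : V) (A : Set V) : Set V :=
  {a ∈ A | gInterval G u a ∩ A = {a}}

/-- The halfspace `W(u,v)` associated with an edge `uv`. -/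
def halfspaceW {V : Type*} (G : SimpleGraph V) (u v : V) : Set V :=
  {z | G.dist z u < G.dist z v}


/-! Since `x` is the gate of `u` in `St(z)`, we have `I(x,z) ⊆ I(u,z)`, and a vertex of `St(z)`
lies in `I(u,z)` iff it lies in `I(x,z)`. As `St(z)` contains the neighbours of `z`, and a vertex
`w ≠ z` of `I(u,z) ∩ I(v,z)` yields a neighbour of `z` on a `(z,w)`-geodesic inside that
intersection, `I(x,z) ∩ I(y,z) = {z}` iff `I(u,z) ∩ I(v,z) = {z}`. The latter is equivalent to
`z ∈ I(u,v)`: one direction is the triangle inequality, the other holds because the median of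
`u, v, z` lies in `I(u,z) ∩ I(v,z)`. -/

section

variable {V : Type*} {G : SimpleGraph V}

lemma self_mem_gStar (z : V) : z ∈ gStar G z := by
  refine ⟨0, fun _ => z, Function.injective_of_subsingleton _, fun A B => ?_, ⟨∅, rfl⟩, ⟨∅, rfl⟩⟩
  simp [Subsingleton.elim A B]

lemma mem_gStar_of_adj {z w : V} (h : G.Adj z w) : w ∈ gStar G z := by
  classical
  have hcases : ∀ A : Finset (Fin 1), A = ∅ ∨ A = {0} := by decide
  refine ⟨1, fun A => if A = ∅ then z else w, fun A B hAB => ?_, fun A B => ?_,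
    ⟨∅, by simp⟩, ⟨{0}, by simp⟩⟩
  · rcases hcases A with rfl | rfl <;> rcases hcases B with rfl | rfl <;> simp_all [h.ne]
  · rcases hcases A with rfl | rfl <;> rcases hcases B with rfl | rfl <;>
      simp [h, h.symm, symmDiff_def]

lemma mem_gInterval {u v w : V} :
    w ∈ gInterval G u v ↔ G.dist u w + G.dist w v = G.dist u v :=
  Iff.rfl

lemma gInterval_comm (u v : V) : gInterval G u v = gInterval G v u := by
  ext w
  simp only [mem_gInterval, dist_comm (u := w), dist_comm (v := u)]
  omega

lemma right_mem_gInterval (u v : V) : v ∈ gInterval G u v := by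
  simp [mem_gInterval]

lemma gInterval_subset_of_mem (hG : G.Connected) {u w z : V} (hw : w ∈ gInterval G u z) :
    gInterval G w z ⊆ gInterval G u z := by
  intro n hn
  have h₁ := hG.dist_triangle (u := u) (v := n) (w := z)
  have h₂ := hG.dist_triangle (u := u) (v := w) (w := n)
  rw [mem_gInterval] at hw hn ⊢
  omega

lemma exists_adj_mem_gInterval (hG : G.Connected) {w z : V} (hwz : w ≠ z) :
    ∃ n, G.Adj z n ∧ n ∈ gInterval G w z := by
  obtain ⟨p, hp⟩ := hG.exists_walk_length_eq_dist z w
  cases p with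
  | nil => exact absurd rfl hwz
  | @cons _ n _ hadj q =>
    refine ⟨n, hadj, ?_⟩
    have h₁ := dist_le q
    have h₂ := hG.dist_triangle (u := z) (v := n) (w := w)
    have h₃ : G.dist z n = 1 := dist_eq_one_iff_adj.mpr hadj
    rw [Walk.length_cons] at hp
    rw [mem_gInterval, dist_comm (u := w) (v := n), dist_comm (u := n) (v := z),
      dist_comm (u := w) (v := z)]
    omega

lemma SimpleGraph.Connected.gInterval_inter_eq_singleton (hG : G.Connected) {u v z : V}
    (hz : z ∈ gInterval G u v) : gInterval G u z ∩ gInterval G v z = {z} := by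
  refine eq_singleton_iff_unique_mem.2
    ⟨⟨right_mem_gInterval u z, right_mem_gInterval v z⟩, fun w ⟨hwu, hwv⟩ => ?_⟩
  have h := hG.dist_triangle (u := u) (v := w) (w := v)
  rw [mem_gInterval] at hz hwu hwv
  rw [dist_comm (u := w)] at h
  rw [dist_comm (u := z)] at hz
  exact hG.dist_eq_zero_iff.1 (by omega)

lemma MedianGraph.mem_gInterval_of_inter_eq_singleton (hG : MedianGraph G) {u v z : V}
    (h : gInterval G u z ∩ gInterval G v z = {z}) : z ∈ gInterval G u v := by
  obtain ⟨m, ⟨hmuv, hmvz, hmzu⟩, -⟩ := hG.2 u v z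
  rw [gInterval_comm z u] at hmzu
  have hm : m ∈ ({z} : Set V) := h ▸ ⟨hmzu, hmvz⟩
  rwa [mem_singleton_iff.1 hm] at hmuv

lemma IsGate.gate_mem_gInterval {S : Set V} {u g z : V} (hg : IsGate G S u g) (hz : z ∈ S) :
    g ∈ gInterval G u z :=
  (hg.2 z hz).symm

lemma IsGate.mem_gInterval_gate {S : Set V} {u g z w : V} (hg : IsGate G S u g) (hz : z ∈ S)
    (hw : w ∈ S) (hwu : w ∈ gInterval G u z) : w ∈ gInterval G g z := by
  have h₁ := hg.2 z hz
  have h₂ := hg.2 w hw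
  rw [mem_gInterval] at hwu ⊢
  omega

lemma inter_gInterval_gates_eq_singleton_iff (hG : G.Connected) {S : Set V} {z u v x y : V}
    (hzS : z ∈ S) (hadjS : ∀ n, G.Adj z n → n ∈ S) (hx : IsGate G S u x)
    (hy : IsGate G S v y) :
    gInterval G x z ∩ gInterval G y z = {z} ↔ gInterval G u z ∩ gInterval G v z = {z} := by
  constructor
  · intro h
    refine eq_singleton_iff_unique_mem.2
      ⟨⟨right_mem_gInterval u z, right_mem_gInterval v z⟩, fun w ⟨hwu, hwv⟩ => ?_⟩
    by_contra hwz
    obtain ⟨n, hzn, hnw⟩ := exists_adj_mem_gInterval hG hwz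
    have hnS := hadjS n hzn
    have hn : n ∈ gInterval G x z ∩ gInterval G y z :=
      ⟨hx.mem_gInterval_gate hzS hnS (gInterval_subset_of_mem hG hwu hnw),
        hy.mem_gInterval_gate hzS hnS (gInterval_subset_of_mem hG hwv hnw)⟩
    rw [h] at hn
    exact hzn.ne hn.symm
  · intro h
    refine Subset.antisymm ?_
      (singleton_subset_iff.2 ⟨right_mem_gInterval x z, right_mem_gInterval y z⟩)
    rw [← h]
    exact inter_subset_inter (gInterval_subset_of_mem hG (hx.gate_mem_gInterval hzS))
      (gInterval_subset_of_mem hG (hy.gate_mem_gInterval hzS))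

end

/-- Let `x`, `y` be the gates in `St(z)` of vertices `u`, `v` of a median graph.
Then `I(x,z) ∩ I(y,z) = {z}` iff `z` lies on a shortest `(u,v)`-path. -/
theorem separated_iff_through_z {V : Type*} (G : SimpleGraph V)
    (hG : MedianGraph G) (z u v x y : V)
    (hx : IsGate G (gStar G z) u x) (hy : IsGate G (gStar G z) v y) :
    gInterval G x z ∩ gInterval G y z = {z} ↔
      G.dist u v = G.dist u z + G.dist z v := by
  rw [inter_gInterval_gates_eq_singleton_iff hG.1 (self_mem_gStar z)
    (fun _ => mem_gStar_of_adj) hx hy, eq_comm (a := G.dist u v)]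
  exact ⟨hG.mem_gInterval_of_inter_eq_singleton, hG.1.gInterval_inter_eq_singleton⟩
end

section
/- Let G be a cube-free median graph, z a vertex of G, and let the fibers of the star St(z) be classified: F(x) is a panel if d_G(x,z) = 1 and a cone if d_G(x,z) = 2. Suppose u and v belong to distinct cones F(x) and F(y) respectively, and F(w) is a panel neighboring both F(x) and F(y). Let u⁺ and v⁺ be the gates of u and v in F(w). Then d_G(u,v) = d_G(u,u⁺) + d_G(u⁺,v⁺) + d_G(v⁺,v). -/
open SimpleGraph Set

private def cubeMap {V : Type*} (z w p q x y s h : V) : Finset (Fin 3) → V := fun A =>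
  if A = ∅ then z else if A = {0} then w else if A = {1} then p
  else if A = {2} then q else if A = ({0,1} : Finset (Fin 3)) then x
  else if A = ({0,2} : Finset (Fin 3)) then y
  else if A = ({1,2} : Finset (Fin 3)) then s else h

private lemma finset3_enum : ∀ A : Finset (Fin 3), A = ∅ ∨ A = {0} ∨ A = {1} ∨ A = {2} ∨
    A = ({0,1} : Finset (Fin 3)) ∨ A = {0,2} ∨ A = {1,2} ∨ A = {0,1,2} := by decide


private lemma cm0 {V : Type*} (z w p q x y s h : V) : cubeMap z w p q x y s h ∅ = z := rfl
private lemma cm1 {V : Type*} (z w p q x y s h : V) : cubeMap z w p q x y s h {0} = w := rfl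
private lemma cm2 {V : Type*} (z w p q x y s h : V) : cubeMap z w p q x y s h {1} = p := rfl
private lemma cm3 {V : Type*} (z w p q x y s h : V) : cubeMap z w p q x y s h {2} = q := rfl
private lemma cm4 {V : Type*} (z w p q x y s h : V) : cubeMap z w p q x y s h {0,1} = x := rfl
private lemma cm5 {V : Type*} (z w p q x y s h : V) : cubeMap z w p q x y s h {0,2} = y := rfl
private lemma cm6 {V : Type*} (z w p q x y s h : V) : cubeMap z w p q x y s h {1,2} = s := rfl
private lemma cm7 {V : Type*} (z w p q x y s h : V) : cubeMap z w p q x y s h {0,1,2} = h := rfl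

set_option maxHeartbeats 3200000 in
private lemma cube8 {V : Type*} (G : SimpleGraph V) (z w p q x y s h : V)
    (azw : G.Adj z w) (azp : G.Adj z p) (azq : G.Adj z q)
    (awx : G.Adj w x) (awy : G.Adj w y) (apx : G.Adj p x) (aps : G.Adj p s)
    (aqy : G.Adj q y) (aqs : G.Adj q s) (axh : G.Adj x h) (ayh : G.Adj y h) (ash : G.Adj s h)
    (nzx : ¬G.Adj z x) (nzy : ¬G.Adj z y) (nzs : ¬G.Adj z s) (nzh : ¬G.Adj z h)
    (nwp : ¬G.Adj w p) (nwq : ¬G.Adj w q) (nws : ¬G.Adj w s) (nwh : ¬G.Adj w h)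
    (npq : ¬G.Adj p q) (npy : ¬G.Adj p y) (nph : ¬G.Adj p h)
    (nqx : ¬G.Adj q x) (nqh : ¬G.Adj q h)
    (nxy : ¬G.Adj x y) (nxs : ¬G.Adj x s) (nys : ¬G.Adj y s)
    (ezx : z ≠ x) (ezy : z ≠ y) (ezs : z ≠ s) (ezh : z ≠ h)
    (ewp : w ≠ p) (ewq : w ≠ q) (ews : w ≠ s) (ewh : w ≠ h)
    (epq : p ≠ q) (epy : p ≠ y) (eph : p ≠ h)
    (eqx : q ≠ x) (eqh : q ≠ h)
    (exy : x ≠ y) (exs : x ≠ s) (eys : y ≠ s) : HasInducedCube G 3 := by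
  refine ⟨cubeMap z w p q x y s h, ?_, fun A => Set.mem_univ _, ?_⟩
  · intro A B hAB
    rcases finset3_enum A with rfl|rfl|rfl|rfl|rfl|rfl|rfl|rfl <;>
      rcases finset3_enum B with rfl|rfl|rfl|rfl|rfl|rfl|rfl|rfl <;>
      simp only [cm0, cm1, cm2, cm3, cm4, cm5, cm6, cm7] at hAB <;>
      first
        | rfl
        | (exact absurd hAB (by solve_by_elim [Ne.symm, SimpleGraph.Adj.ne]))
  · intro A B
    rcases finset3_enum A with rfl|rfl|rfl|rfl|rfl|rfl|rfl|rfl <;>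
      rcases finset3_enum B with rfl|rfl|rfl|rfl|rfl|rfl|rfl|rfl <;>
      simp only [cm0, cm1, cm2, cm3, cm4, cm5, cm6, cm7] <;>
      first
        | (refine iff_of_true ?_ (by decide); solve_by_elim [SimpleGraph.Adj.symm])
        | (refine iff_of_false (fun hadj => ?_) (by decide) ;
            solve_by_elim [SimpleGraph.Adj.symm, SimpleGraph.irrefl])

section MedianAux

variable {V : Type*} {G : SimpleGraph V}

private lemma adj_dist_one {a b : V} (h : G.Adj a b) : G.dist a b = 1 :=
  SimpleGraph.dist_eq_one_iff_adj.mpr h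

private lemma adj_of_dist_one {a b : V} (h : G.dist a b = 1) : G.Adj a b :=
  SimpleGraph.dist_eq_one_iff_adj.mp h

private lemma eq_of_dist_zero (hc : G.Connected) {a b : V} (h : G.dist a b = 0) : a = b :=
  hc.dist_eq_zero_iff.mp h

private lemma parity (hG : MedianGraph G) {a b : V} (hab : G.Adj a b) (p : V) :
    G.dist p b = G.dist p a + 1 ∨ G.dist p a = G.dist p b + 1 := by
  obtain ⟨m, ⟨h1, h2, h3⟩, -⟩ := hG.2 a b p
  have h1' : G.dist a m + G.dist m b = G.dist a b := h1
  have h2' : G.dist b m + G.dist m p = G.dist b p := h2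
  have h3' : G.dist p m + G.dist m a = G.dist p a := h3
  have hab1 : G.dist a b = 1 := adj_dist_one hab
  rw [hab1] at h1'
  rcases Nat.eq_zero_or_pos (G.dist a m) with h0 | hpos
  · have hma : m = a := (eq_of_dist_zero hG.1 h0).symm
    rw [hma] at h2'
    left
    have e1 : G.dist b a = 1 := by rw [SimpleGraph.dist_comm]; exact hab1
    have e2 : G.dist a p = G.dist p a := SimpleGraph.dist_comm
    have e3 : G.dist b p = G.dist p b := SimpleGraph.dist_comm
    omega
  · have hmb0 : G.dist m b = 0 := by omega
    have hmb : m = b := eq_of_dist_zero hG.1 hmb0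
    rw [hmb] at h3'
    right
    have e1 : G.dist b a = 1 := by rw [SimpleGraph.dist_comm]; exact hab1
    omega

private lemma trifree (hG : MedianGraph G) {a b c : V} (h1 : G.Adj a b) (h2 : G.Adj b c)
    (h3 : G.Adj a c) : False := by
  have e1 := adj_dist_one h1
  have e3 := adj_dist_one h3
  rcases parity hG h2 a with h | h <;> omega

private lemma dist2_common (hG : MedianGraph G) {a b c : V} (h1 : G.Adj b a) (h2 : G.Adj b c)
    (hne : a ≠ c) : G.dist a c = 2 := by
  have t := hG.1.dist_triangle (u := a) (v := b) (w := c)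
  have e1 : G.dist a b = 1 := adj_dist_one h1.symm
  have e2 : G.dist b c = 1 := adj_dist_one h2
  have h0 : G.dist a c ≠ 0 := fun h => hne (eq_of_dist_zero hG.1 h)
  have h1' : G.dist a c ≠ 1 := fun h => trifree hG h1 (adj_of_dist_one h) h2
  omega

private lemma unique_nbr (hG : MedianGraph G) {c1 c2 c3 p q : V}
    (d12 : G.dist c1 c2 = 2) (d23 : G.dist c2 c3 = 2) (d31 : G.dist c3 c1 = 2)
    (p1 : G.Adj p c1) (p2 : G.Adj p c2) (p3 : G.Adj p c3)
    (q1 : G.Adj q c1) (q2 : G.Adj q c2) (q3 : G.Adj q c3) : p = q := by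
  obtain ⟨m, -, hm⟩ := hG.2 c1 c2 c3
  have key : ∀ r : V, G.Adj r c1 → G.Adj r c2 → G.Adj r c3 → r = m := by
    intro r r1 r2 r3
    refine hm r ⟨?_, ?_, ?_⟩
    · show G.dist c1 r + G.dist r c2 = G.dist c1 c2
      rw [SimpleGraph.dist_comm (u := c1) (v := r), adj_dist_one r1, adj_dist_one r2, d12]
    · show G.dist c2 r + G.dist r c3 = G.dist c2 c3
      rw [SimpleGraph.dist_comm (u := c2) (v := r), adj_dist_one r2, adj_dist_one r3, d23]
    · show G.dist c3 r + G.dist r c1 = G.dist c3 c1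
      rw [SimpleGraph.dist_comm (u := c3) (v := r), adj_dist_one r3, adj_dist_one r1, d31]
  rw [key p p1 p2 p3, key q q1 q2 q3]

private lemma common_nbr (hG : MedianGraph G) {a b c : V}
    (dab : G.dist a b = 2) (dbc : G.dist b c = 2) (dca : G.dist c a = 2) :
    ∃ μ : V, G.Adj μ a ∧ G.Adj μ b ∧ G.Adj μ c := by
  obtain ⟨m, ⟨h1, h2, h3⟩, -⟩ := hG.2 a b c
  have h1' : G.dist a m + G.dist m b = G.dist a b := h1
  have h2' : G.dist b m + G.dist m c = G.dist b c := h2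
  have h3' : G.dist c m + G.dist m a = G.dist c a := h3
  rw [dab] at h1'; rw [dbc] at h2'; rw [dca] at h3'
  have cab : G.dist b a = 2 := by rw [SimpleGraph.dist_comm]; exact dab
  have cca : G.dist a c = 2 := by rw [SimpleGraph.dist_comm]; exact dca
  have ccb : G.dist c b = 2 := by rw [SimpleGraph.dist_comm]; exact dbc
  have cbm : G.dist b m = G.dist m b := SimpleGraph.dist_comm
  rcases Nat.eq_zero_or_pos (G.dist a m) with h0 | hpos
  · exfalso
    have hma : m = a := (eq_of_dist_zero hG.1 h0).symm
    rw [hma] at h2'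
    rw [cab, cca] at h2'
    omega
  rcases Nat.eq_zero_or_pos (G.dist m b) with hb0 | hbpos
  · exfalso
    have hmb : m = b := eq_of_dist_zero hG.1 hb0
    rw [hmb] at h3'
    rw [ccb, cab] at h3'
    omega
  have ham : G.dist a m = 1 := by omega
  have hmb : G.dist m b = 1 := by omega
  have hmc : G.dist m c = 1 := by omega
  exact ⟨m, (adj_of_dist_one ham).symm, adj_of_dist_one hmb, adj_of_dist_one hmc⟩

end MedianAux

section CubeAux

variable {V : Type*} {G : SimpleGraph V}

private lemma cube3_of_cube {d : ℕ} (hd : 3 ≤ d) (h : HasInducedCube G d) :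
    HasInducedCube G 3 := by
  obtain ⟨f, finj, -, fadj⟩ := h
  have einj : Function.Injective (Fin.castLE hd) := Fin.castLE_injective hd
  refine ⟨fun S => f (S.image (Fin.castLE hd)), ?_, fun A => Set.mem_univ _, ?_⟩
  · intro A B hAB
    exact Finset.image_injective einj (finj hAB)
  · intro A B
    rw [fadj, ← Finset.image_symmDiff _ _ einj, Finset.card_image_of_injective _ einj]

private lemma symmDiff_single_pair {α : Type*} [DecidableEq α] {i j : α} (hij : i ≠ j) :
    symmDiff ({i} : Finset α) {i, j} = {j} := by
  ext a
  simp only [Finset.mem_symmDiff, Finset.mem_singleton, Finset.mem_insert]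
  constructor
  · rintro (⟨rfl, hn⟩ | ⟨(rfl | rfl), hn⟩)
    · exact absurd (Or.inl rfl) hn
    · exact absurd rfl hn
    · rfl
  · rintro rfl
    exact Or.inr ⟨Or.inr rfl, fun hji => hij hji.symm⟩

private lemma star_small (hG : MedianGraph G) (hcf : CubeFree G) {z s : V}
    (hs : s ∈ gStar G z) : G.dist z s ≤ 2 ∧
      (G.dist z s = 2 → ∃ p q : V, p ≠ q ∧ G.Adj z p ∧ G.Adj p s ∧ G.Adj z q ∧ G.Adj q s) := by
  obtain ⟨d, f, finj, fadj, ⟨A, hA⟩, ⟨B, hB⟩⟩ := hs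
  by_cases hd : 3 ≤ d
  · exact absurd (cube3_of_cube hd ⟨f, finj, fun _ => Set.mem_univ _, fadj⟩) hcf
  push_neg at hd
  have hcard : (symmDiff A B).card ≤ 2 := by
    calc (symmDiff A B).card ≤ Fintype.card (Fin d) := Finset.card_le_univ _
    _ = d := Fintype.card_fin d
    _ ≤ 2 := by omega
  have h3 : (symmDiff A B).card = 0 ∨ (symmDiff A B).card = 1 ∨ (symmDiff A B).card = 2 := by
    omega
  rcases h3 with h0 | h1 | h2
  · have hABeq : A = B := symmDiff_eq_bot.mp (by
      rw [Finset.bot_eq_empty]; exact Finset.card_eq_zero.mp h0)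
    have hzs : z = s := by rw [← hA, ← hB, hABeq]
    have h00 : G.dist z s = 0 := by rw [hzs, SimpleGraph.dist_self]
    exact ⟨by omega, fun hc => absurd hc (by omega)⟩
  · have hadj : G.Adj z s := by rw [← hA, ← hB]; exact (fadj A B).mpr h1
    have h1d : G.dist z s = 1 := adj_dist_one hadj
    exact ⟨by omega, fun hc => absurd hc (by omega)⟩
  · obtain ⟨i, j, hij, hAB⟩ := Finset.card_eq_two.mp h2
    have hzp : G.Adj z (f (symmDiff A {i})) := by
      rw [← hA]
      refine (fadj _ _).mpr ?_
      rw [symmDiff_symmDiff_cancel_left]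
      exact Finset.card_singleton i
    have hzq : G.Adj z (f (symmDiff A {j})) := by
      rw [← hA]
      refine (fadj _ _).mpr ?_
      rw [symmDiff_symmDiff_cancel_left]
      exact Finset.card_singleton j
    have hps : G.Adj (f (symmDiff A {i})) s := by
      rw [← hB]
      refine (fadj _ _).mpr ?_
      have : symmDiff (symmDiff A {i}) B = {j} := by
        rw [symmDiff_comm A ({i} : Finset (Fin d)), symmDiff_assoc, hAB,
          symmDiff_single_pair hij]
      rw [this]
      exact Finset.card_singleton j
    have hqs : G.Adj (f (symmDiff A {j})) s := by
      rw [← hB]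
      refine (fadj _ _).mpr ?_
      have : symmDiff (symmDiff A {j}) B = {i} := by
        rw [symmDiff_comm A ({j} : Finset (Fin d)), symmDiff_assoc, hAB,
          Finset.pair_comm, symmDiff_single_pair hij.symm]
      rw [this]
      exact Finset.card_singleton i
    have hPQ : f (symmDiff A {i}) ≠ f (symmDiff A {j}) := by
      intro heq
      have h' := finj heq
      have : ({i} : Finset (Fin d)) = {j} := by
        rw [← symmDiff_symmDiff_cancel_left (a := A) (b := ({i} : Finset (Fin d))), h',
          symmDiff_symmDiff_cancel_left]
      exact hij (Finset.singleton_inj.mp this)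
    have hle : G.dist z s ≤ 2 := by
      have t := hG.1.dist_triangle (u := z) (v := f (symmDiff A {i})) (w := s)
      have e1 := adj_dist_one hzp
      have e2 := adj_dist_one hps
      omega
    exact ⟨hle, fun _ => ⟨_, _, hPQ, hzp, hps, hzq, hqs⟩⟩

end CubeAux

section Aux3

variable {V : Type*} {G : SimpleGraph V}

private lemma aux3 (hG : MedianGraph G) (hcf : CubeFree G) {z w x y s p q : V}
    (azw : G.Adj z w) (awx : G.Adj w x) (awy : G.Adj w y)
    (azp : G.Adj z p) (azq : G.Adj z q) (aps : G.Adj p s) (aqs : G.Adj q s)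
    (axp : G.Adj x p) (ayq : G.Adj y q)
    (dxz : G.dist x z = 2) (dyz : G.dist y z = 2) (dxy : G.dist x y = 2)
    (dsz : G.dist s z = 2) (dsx : G.dist s x = 2) (dsy : G.dist s y = 2)
    (dsw : G.dist s w = 3) (dwp : G.dist w p = 2) (dwq : G.dist w q = 2)
    (hpq : p ≠ q) : False := by
  have conn := hG.1
  have nadj : ∀ a b : V, 2 ≤ G.dist a b → ¬G.Adj a b := by
    intro a b hd hadj
    have := adj_dist_one hadj
    omega
  have nepos : ∀ a b : V, 1 ≤ G.dist a b → a ≠ b := by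
    intro a b hd he
    rw [he, SimpleGraph.dist_self] at hd
    omega
  have czx : G.dist z x = 2 := by rw [SimpleGraph.dist_comm]; exact dxz
  have czy : G.dist z y = 2 := by rw [SimpleGraph.dist_comm]; exact dyz
  have czs : G.dist z s = 2 := by rw [SimpleGraph.dist_comm]; exact dsz
  have cxs : G.dist x s = 2 := by rw [SimpleGraph.dist_comm]; exact dsx
  have cys : G.dist y s = 2 := by rw [SimpleGraph.dist_comm]; exact dsy
  have cws : G.dist w s = 3 := by rw [SimpleGraph.dist_comm]; exact dsw
  have dpq : G.dist p q = 2 := dist2_common hG azp azq hpq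
  have nyp : ¬ G.Adj y p := by
    intro hadj
    have hwp : w = p := unique_nbr hG dxy dyz czx awx awy azw.symm axp.symm hadj.symm azp.symm
    rw [hwp, SimpleGraph.dist_self] at dwp
    omega
  have cqw : G.dist q w = 2 := by rw [SimpleGraph.dist_comm]; exact dwq
  have nxq : ¬ G.Adj x q := by
    intro hadj
    have hxz' : x = z := unique_nbr hG dwp dpq cqw awx.symm axp hadj azw azp azq
    rw [hxz', SimpleGraph.dist_self] at dxz
    omega
  obtain ⟨h, hhx, hhy, hhs⟩ := common_nbr hG dxy cys dsx
  have ehw : h ≠ w := by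
    intro e
    have hd1 := adj_dist_one hhs
    rw [e, SimpleGraph.dist_comm] at hd1
    omega
  have ehp : h ≠ p := fun e => nyp (by rw [← e]; exact hhy.symm)
  have ehq : h ≠ q := fun e => nxq (by rw [← e]; exact hhx.symm)
  have dwh : G.dist w h = 2 := by
    have e1 := adj_dist_one awx
    rcases parity hG hhx w with h1 | h1
    · exfalso
      have h0 : G.dist w h = 0 := by omega
      exact ehw (eq_of_dist_zero conn h0).symm
    · omega
  have nph : ¬ G.Adj p h := fun hadj => trifree hG axp hadj hhx.symm
  have nqh : ¬ G.Adj q h := fun hadj => trifree hG aqs.symm hadj hhs.symm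
  have dph : G.dist p h = 2 := dist2_common hG axp hhx.symm ehp.symm
  have chw : G.dist h w = 2 := by rw [SimpleGraph.dist_comm]; exact dwh
  have dzh : G.dist z h = 3 := by
    rcases parity hG hhx z with h1 | h1
    · -- dist z x = dist z h + 1, so dist z h = 1
      exfalso
      have azh : G.Adj z h := adj_of_dist_one (by omega)
      have hxz' : x = z := unique_nbr hG dwp dph chw awx.symm axp hhx.symm azw azp azh
      rw [hxz', SimpleGraph.dist_self] at dxz
      omega
    · omega
  have dpz : G.dist p z = 1 := adj_dist_one azp.symm
  have dqz : G.dist q z = 1 := adj_dist_one azq.symm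
  exact hcf (cube8 G z w p q x y s h
    azw azp azq awx awy axp.symm aps ayq.symm aqs hhx.symm hhy.symm hhs.symm
    (nadj z x (by omega)) (nadj z y (by omega)) (nadj z s (by omega)) (nadj z h (by omega))
    (nadj w p (by omega)) (nadj w q (by omega)) (nadj w s (by omega)) (nadj w h (by omega))
    (nadj p q (by omega)) (fun e => nyp e.symm) nph
    (fun e => nxq e.symm) nqh
    (nadj x y (by omega)) (nadj x s (by omega)) (nadj y s (by omega))
    (nepos z x (by omega)) (nepos z y (by omega)) (nepos z s (by omega)) (nepos z h (by omega))
    (nepos w p (by omega)) (nepos w q (by omega)) (nepos w s (by omega)) (nepos w h (by omega))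
    hpq (fun e => by rw [e] at dpz; omega) ehp.symm
    (fun e => by rw [e] at dqz; omega) ehq.symm
    (nepos x y (by omega)) (nepos x s (by omega)) (nepos y s (by omega)))

end Aux3

/-- Distance formula for 2-neighboring vertices: `u`, `v` in distinct cones `F(x)`,
`F(y)` both neighboring a common panel `F(w)`; `u⁺`, `v⁺` the gates of `u`, `v`
in `F(w)`. -/
theorem dist_two_neighboring {V : Type*} (G : SimpleGraph V)
    (hG : MedianGraph G) (hcf : CubeFree G) (z x y w u v up vp : V)
    (hxz : G.dist x z = 2) (hyz : G.dist y z = 2) (hxy : x ≠ y)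
    (hw : w ∈ gStar G z) (hwz : G.dist w z = 1)
    (hu : IsGate G (gStar G z) u x) (hv : IsGate G (gStar G z) v y)
    (hnx : Neighboring G (gStar G z) w x) (hny : Neighboring G (gStar G z) w y)
    (hup : IsGate G (fiber G (gStar G z) w) u up)
    (hvp : IsGate G (fiber G (gStar G z) w) v vp) :
    G.dist u v = G.dist u up + G.dist up vp + G.dist vp v := by
  have conn := hG.1
  have hxS : x ∈ gStar G z := hu.1
  have hyS : y ∈ gStar G z := hv.1
  -- the panel vertex w is adjacent to the cone vertices x and y
  have key_adj : ∀ t : V, t ∈ gStar G z → G.dist t z = 2 →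
      Neighboring G (gStar G z) w t → G.Adj w t := by
    intro t htS htz hn
    obtain ⟨a, ha, b, hb, hab⟩ := hn
    have ha' : IsGate G (gStar G z) a w := ha
    have hb' : IsGate G (gStar G z) b t := hb
    have h1 : G.dist a t = G.dist a w + G.dist w t := ha'.2 t htS
    have h2 : G.dist b w = G.dist b t + G.dist t w := hb'.2 w hw
    have t1 : G.dist a t ≤ G.dist a b + G.dist b t := conn.dist_triangle
    have t2 : G.dist b w ≤ G.dist b a + G.dist a w := conn.dist_triangle
    have e1 : G.dist a b = 1 := adj_dist_one hab
    have e2 : G.dist b a = 1 := adj_dist_one hab.symm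
    have c1 : G.dist w t = G.dist t w := SimpleGraph.dist_comm
    have hne : w ≠ t := by
      intro e
      rw [e] at hwz
      omega
    have h0 : G.dist w t ≠ 0 := fun h => hne (eq_of_dist_zero conn h)
    exact adj_of_dist_one (by omega)
  have adjwx : G.Adj w x := key_adj x hxS hxz hnx
  have adjwy : G.Adj w y := key_adj y hyS hyz hny
  have dwx : G.dist w x = 1 := adj_dist_one adjwx
  have dwy : G.dist w y = 1 := adj_dist_one adjwy
  have adjwz : G.Adj w z := adj_of_dist_one hwz
  have dxy : G.dist x y = 2 := dist2_common hG adjwx adjwy hxy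
  have czx : G.dist z x = 2 := by rw [SimpleGraph.dist_comm]; exact hxz
  -- the median m of u, v, w
  obtain ⟨m, ⟨hmuv, hmvw, hmwu⟩, -⟩ := hG.2 u v w
  have hmuv' : G.dist u m + G.dist m v = G.dist u v := hmuv
  have hmvw' : G.dist v m + G.dist m w = G.dist v w := hmvw
  have hmwu' : G.dist w m + G.dist m u = G.dist w u := hmwu
  -- key claim : the median m lies in the fiber of w
  have hmF : m ∈ fiber G (gStar G z) w := by
    show IsGate G (gStar G z) m w
    refine ⟨hw, fun s hs => ?_⟩
    have hle : G.dist m s ≤ G.dist m w + G.dist w s := conn.dist_triangle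
    have hge : G.dist m w + G.dist w s ≤ G.dist m s := by
      have hus : G.dist u s = G.dist u x + G.dist x s := hu.2 s hs
      have hvs : G.dist v s = G.dist v y + G.dist y s := hv.2 s hs
      have huw : G.dist u w = G.dist u x + G.dist x w := hu.2 w hw
      have hvw : G.dist v w = G.dist v y + G.dist y w := hv.2 w hw
      have cxw : G.dist x w = 1 := by rw [SimpleGraph.dist_comm]; exact dwx
      have cyw : G.dist y w = 1 := by rw [SimpleGraph.dist_comm]; exact dwy
      have c1 : G.dist w u = G.dist u w := SimpleGraph.dist_comm
      have c2 : G.dist m u = G.dist u m := SimpleGraph.dist_comm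
      have c3 : G.dist w m = G.dist m w := SimpleGraph.dist_comm
      have c5 : G.dist x s = G.dist s x := SimpleGraph.dist_comm
      have c6 : G.dist y s = G.dist s y := SimpleGraph.dist_comm
      have c7 : G.dist w s = G.dist s w := SimpleGraph.dist_comm
      have tus : G.dist u s ≤ G.dist u m + G.dist m s := conn.dist_triangle
      have tvs : G.dist v s ≤ G.dist v m + G.dist m s := conn.dist_triangle
      rcases parity hG adjwx s with hx1 | hx1
      · -- dist s x = dist s w + 1 : bound via u
        omega
      rcases parity hG adjwy s with hy1 | hy1
      · -- dist s y = dist s w + 1 : bound via v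
        omega
      -- now dist s w = dist s x + 1 = dist s y + 1 : impossible
      exfalso
      obtain ⟨hsz2, hsq⟩ := star_small hG hcf hs
      have csz : G.dist s z = G.dist z s := SimpleGraph.dist_comm
      rcases parity hG adjwz s with hz1 | hz1
      · -- dist s z = dist s w + 1, so dist s w ≤ 1, so s = x = y
        have hsx0 : G.dist s x = 0 := by omega
        have hsy0 : G.dist s y = 0 := by omega
        exact hxy ((eq_of_dist_zero conn hsx0).symm.trans (eq_of_dist_zero conn hsy0))
      -- hz1 : dist s w = dist s z + 1 ≤ 3
      rcases (by omega : G.dist s w = 1 ∨ G.dist s w = 2 ∨ G.dist s w = 3) with hk | hk | hk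
      · have hsx0 : G.dist s x = 0 := by omega
        have hsy0 : G.dist s y = 0 := by omega
        exact hxy ((eq_of_dist_zero conn hsx0).symm.trans (eq_of_dist_zero conn hsy0))
      · -- dist s w = 2 : s is a common neighbor of x, y, z, hence s = w
        have asx : G.Adj s x := adj_of_dist_one (by omega)
        have asy : G.Adj s y := adj_of_dist_one (by omega)
        have asz : G.Adj s z := adj_of_dist_one (by omega)
        have hws : w = s := unique_nbr hG dxy hyz czx adjwx adjwy adjwz asx asy asz
        rw [← hws, SimpleGraph.dist_self] at hk
        omega
      · -- dist s w = 3 : leads to a forbidden 3-cube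
        have dsx2 : G.dist s x = 2 := by omega
        have dsy2 : G.dist s y = 2 := by omega
        have dsz2 : G.dist s z = 2 := by omega
        obtain ⟨p, q, hpq, azp, aps, azq, aqs⟩ := hsq (by omega)
        have dwp : G.dist w p = 2 := by
          rcases parity hG azp w with h1 | h1
          · omega
          · exfalso
            have hwp : w = p := eq_of_dist_zero conn (by omega)
            have := adj_dist_one aps
            rw [← hwp] at this
            rw [SimpleGraph.dist_comm] at this
            omega
        have dwq : G.dist w q = 2 := by
          rcases parity hG azq w with h1 | h1
          · omega
          · exfalso
            have hwq : w = q := eq_of_dist_zero conn (by omega)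
            have := adj_dist_one aqs
            rw [← hwq] at this
            rw [SimpleGraph.dist_comm] at this
            omega
        have czs2 : G.dist z s = 2 := by omega
        -- common neighbors of z and s are exactly p and q
        have hcn : ∀ r : V, G.Adj r z → G.Adj r s → r = p ∨ r = q := by
          intro r hrz hrs
          by_contra hc
          push_neg at hc
          obtain ⟨hrp, hrq⟩ := hc
          have dpq2 : G.dist p q = 2 := dist2_common hG azp azq hpq
          have dqr2 : G.dist q r = 2 := dist2_common hG azq hrz.symm (fun e => hrq e.symm)
          have drp2 : G.dist r p = 2 := dist2_common hG hrz.symm azp hrp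
          have hzs' : z = s := unique_nbr hG dpq2 dqr2 drp2
            azp azq hrz.symm aps.symm aqs.symm hrs.symm
          rw [hzs', SimpleGraph.dist_self] at czs2
          omega
        have csx2 : G.dist x s = 2 := by rw [SimpleGraph.dist_comm]; exact dsx2
        have csy2 : G.dist y s = 2 := by rw [SimpleGraph.dist_comm]; exact dsy2
        obtain ⟨μ, hμx, hμz, hμs⟩ := common_nbr hG hxz czs2 dsx2
        obtain ⟨ν, hνy, hνz, hνs⟩ := common_nbr hG hyz czs2 dsy2
        have hsame : ∀ r : V, G.Adj r x → G.Adj r y → G.Adj r z → G.Adj r s → False := by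
          intro r h1 h2 h3 h4
          have hwr : w = r := unique_nbr hG dxy hyz czx adjwx adjwy adjwz h1 h2 h3
          have := adj_dist_one h4
          rw [← hwr, SimpleGraph.dist_comm] at this
          omega
        rcases hcn μ hμz hμs with h₁ | h₁ <;> rw [h₁] at hμx hμz hμs <;>
          rcases hcn ν hνz hνs with h₂ | h₂ <;> rw [h₂] at hνy hνz hνs
        · exact hsame p hμx hνy hμz hμs
        · exact aux3 hG hcf adjwz.symm adjwx adjwy hμz.symm hνz.symm hμs hνs
            hμx.symm hνy.symm hxz hyz dxy dsz2 dsx2 dsy2 hk dwp dwq hpq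
        · exact aux3 hG hcf adjwz.symm adjwx adjwy hμz.symm hνz.symm hμs hνs
            hμx.symm hνy.symm hxz hyz dxy dsz2 dsx2 dsy2 hk dwq dwp hpq.symm
        · exact hsame q hμx hνy hμz hμs
    omega
  -- conclusion via the gates of u and v in the fiber of w
  have e1 : G.dist u m = G.dist u up + G.dist up m := hup.2 m hmF
  have e2 : G.dist v m = G.dist v vp + G.dist vp m := hvp.2 m hmF
  have t1 : G.dist up vp ≤ G.dist up m + G.dist m vp := conn.dist_triangle
  have t2 : G.dist u v ≤ G.dist u vp + G.dist vp v := conn.dist_triangle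
  have t3 : G.dist u vp ≤ G.dist u up + G.dist up vp := conn.dist_triangle
  have c1 : G.dist m v = G.dist v m := SimpleGraph.dist_comm
  have c2 : G.dist m vp = G.dist vp m := SimpleGraph.dist_comm
  have c3 : G.dist vp v = G.dist v vp := SimpleGraph.dist_comm
  omega
end
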